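/- Let F be a non-archimedean local field with valuation ring 𝔬 and maximal ideal 𝔭, let n ≥ 1, and let J = { [[a,b],[c,d]] ∈ SL₂(F) : a,d ∈ 𝔬ˣ, b ∈ 𝔬, c ∈ 𝔭ⁿ }. For x ∈ Fˣ, the element w₀·u(x) lies in B·J (with B the upper triangular Borel subgroup of SL₂(F)) if and only if x⁻¹ ∈ 𝔭ⁿ. -/

import Mathlib

open Matrix

/-- `x ∈ F` lies in `𝔭ⁿ`, the n-th power of the maximal ideal of the valuation ring `O`. -/
def InMaxIdealPow {F : Type*} [Field F] (O : ValuationSubring F) (n : ℕ) (x : F) : Prop :=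
  ∃ y : O, y ∈ (IsLocalRing.maximalIdeal O) ^ n ∧ (y : F) = x

/-- `x ∈ F` lies in `𝔬ˣ`, the unit group of the valuation ring `O`. -/
def IsUnitOf {F : Type*} [Field F] (O : ValuationSubring F) (x : F) : Prop :=
  ∃ u : Oˣ, ((u : O) : F) = x

/-- The matrix `g` lies in `J = { [[a,b],[c,d]] ∈ SL₂(F) : a,d ∈ 𝔬ˣ, b ∈ 𝔬, c ∈ 𝔭ⁿ }`. -/
def InJ {F : Type*} [Field F] (O : ValuationSubring F) (n : ℕ)
    (g : Matrix (Fin 2) (Fin 2) F) : Prop :=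
  g.det = 1 ∧ IsUnitOf O (g 0 0) ∧ IsUnitOf O (g 1 1) ∧ g 0 1 ∈ O ∧ InMaxIdealPow O n (g 1 0)

/-- The matrix `g` lies in the upper-triangular Borel `B` of SL₂(F). -/
def InB {F : Type*} [Field F] (g : Matrix (Fin 2) (Fin 2) F) : Prop :=
  g.det = 1 ∧ g 1 0 = 0

/-!
Left multiplication by `b ∈ B` scales the bottom row of a matrix by `b₁₁ ≠ 0`, so the ratio
`g₁₀ / g₁₁` of the bottom row is constant on each coset `B·j`; for `j ∈ J` it equals
`j₁₀ · j₁₁⁻¹ ∈ 𝔭ⁿ · 𝔬 = 𝔭ⁿ`. For `g = w₀·u(x)` the bottom row is `(1, x)`, which gives one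
direction; conversely, the Iwasawa decomposition `w₀·u(x) = t(x⁻¹)u(-x) · ū(x⁻¹)` exhibits
`w₀·u(x) ∈ B·J` as soon as `x⁻¹ ∈ 𝔭ⁿ`.
-/

section

variable {F : Type*} [Field F] {O : ValuationSubring F} {n : ℕ}

theorem InMaxIdealPow.mul_mem {a b : F} (ha : InMaxIdealPow O n a) (hb : b ∈ O) :
    InMaxIdealPow O n (a * b) := by
  obtain ⟨y, hy, rfl⟩ := ha
  exact ⟨y * ⟨b, hb⟩, Ideal.mul_mem_right _ _ hy, rfl⟩

theorem IsUnitOf.inv_mem {a : F} (ha : IsUnitOf O a) : a⁻¹ ∈ O := by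
  obtain ⟨u, rfl⟩ := ha
  have h : (((u⁻¹ : Oˣ) : O) : F) * ((u : O) : F) = 1 := by norm_cast; simp
  rw [← eq_inv_of_mul_eq_one_left h]
  exact ((u⁻¹ : Oˣ) : O).prop

theorem InB.apply_one_one_ne_zero {b : Matrix (Fin 2) (Fin 2) F} (hb : InB b) : b 1 1 ≠ 0 := by
  intro h
  have hdet := hb.1
  rw [det_fin_two, hb.2, h] at hdet
  simp at hdet

theorem InB.mul_apply_one {b : Matrix (Fin 2) (Fin 2) F} (hb : InB b)
    (g : Matrix (Fin 2) (Fin 2) F) (k : Fin 2) : (b * g) 1 k = b 1 1 * g 1 k := by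
  simp [mul_apply, Fin.sum_univ_two, hb.2]

theorem inMaxIdealPow_div_of_eq_mul {g b j : Matrix (Fin 2) (Fin 2) F} (hb : InB b)
    (hj : InJ O n j) (hg : g = b * j) : InMaxIdealPow O n (g 1 0 / g 1 1) := by
  rw [hg, hb.mul_apply_one, hb.mul_apply_one, mul_div_mul_left _ _ hb.apply_one_one_ne_zero,
    div_eq_mul_inv]
  exact hj.2.2.2.2.mul_mem hj.2.2.1.inv_mem

theorem inJ_lowerUnipotent {c : F} (hc : InMaxIdealPow O n c) : InJ O n !![1, 0; c, 1] :=
  ⟨by simp [det_fin_two_of], ⟨1, by simp⟩, ⟨1, by simp⟩, by simp,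
    by simpa using hc⟩

theorem inB_iwasawaFactor {x : F} (hx : x ≠ 0) : InB !![x⁻¹, -1; 0, x] :=
  ⟨by simp [det_fin_two_of, hx], rfl⟩

theorem w₀_mul_upperUnipotent_eq {x : F} (hx : x ≠ 0) :
    (!![0, -1; 1, 0] : Matrix (Fin 2) (Fin 2) F) * !![1, x; 0, 1] =
      !![x⁻¹, -1; 0, x] * !![1, 0; x⁻¹, 1] := by
  ext i k
  fin_cases i <;> fin_cases k <;> simp [mul_apply, Fin.sum_univ_two, hx]

end

theorem support_criterion_general {F : Type*} [Field F] (O : ValuationSubring F) (n : ℕ)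
    (x : F) (hx : x ≠ 0) :
    (∃ b j : Matrix (Fin 2) (Fin 2) F, InB b ∧ InJ O n j ∧
        (!![0, -1; 1, 0] : Matrix (Fin 2) (Fin 2) F) * !![1, x; 0, 1] = b * j) ↔
      InMaxIdealPow O n x⁻¹ := by
  constructor
  · rintro ⟨b, j, hb, hj, hg⟩
    simpa [mul_apply, Fin.sum_univ_two] using inMaxIdealPow_div_of_eq_mul hb hj hg
  · intro hxinv
    exact ⟨_, _, inB_iwasawaFactor hx, inJ_lowerUnipotent hxinv, w₀_mul_upperUnipotent_eq hx⟩

/-- Support criterion: for `x ∈ Fˣ`, `w₀·u(x) ∈ B·J` iff `x⁻¹ ∈ 𝔭ⁿ`. -/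
theorem support_criterion {F : Type*} [Field F] (O : ValuationSubring F) (n : ℕ)
    (hn : 1 ≤ n) (x : F) (hx : x ≠ 0) :
    (∃ b j : Matrix (Fin 2) (Fin 2) F, InB b ∧ InJ O n j ∧
        (!![0, -1; 1, 0] : Matrix (Fin 2) (Fin 2) F) * !![1, x; 0, 1] = b * j) ↔
      InMaxIdealPow O n x⁻¹ :=
  support_criterion_general O n x hx
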